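/- Let C ⊆ ℱ be a nonempty compact set and let (c_m, d_m) ∈ 𝒫 be such that r_{c_m,d_m}(z) > r_{c,d}(z) for all (c,d) ∈ 𝒫 with (c,d) ≠ (c_m,d_m) and all z ∈ C. Then sup_{z∈C} | P_n(z)/σ^{(n)}_{c_m,d_m}(z) − 1 | → 0 as n → ∞; in particular, there exists N such that for all n ≥ N and all z ∈ C, P_n(z) ≠ 0. -/

import Mathlib

open Filter Topology Set

/-- `σ_{c,d}(z) = exp(2πi m (az+b)/(cz+d)) / (cz+d)^k` with the concrete Bézout choice
`a = gcdB c d`, `b = -gcdA c d` (so that `a*d - b*c = gcd c d = 1` for coprime `c,d`;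
the value is independent of this choice since `m` is an integer). -/
noncomputable def sigmaP (k m : ℕ) (c d : ℤ) (z : ℂ) : ℂ :=
  Complex.exp (2 * Real.pi * Complex.I * (m : ℂ) *
      ((Int.gcdB c d : ℂ) * z - (Int.gcdA c d : ℂ)) / ((c : ℂ) * z + (d : ℂ))) /
    ((c : ℂ) * z + (d : ℂ)) ^ k

/-- The index set `𝒫`: coprime pairs `(c,d)` with `c > 0`, together with `(0,1)`. -/
def Pset : Set (ℤ × ℤ) := {p | (IsCoprime p.1 p.2 ∧ 0 < p.1) ∨ p = (0, 1)}

/-- The Poincaré series `P_{k,m}(z) = Σ_{(c,d)∈𝒫} σ_{c,d}(z)`. -/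
noncomputable def poincareP (k m : ℕ) (z : ℂ) : ℂ :=
  ∑' p : Pset, sigmaP k m p.1.1 p.1.2 z

/-- `r_{c,d}(z) = exp(-2πα · Im z/|cz+d|²)/|cz+d|`. -/
noncomputable def rP (α : ℝ) (c d : ℤ) (z : ℂ) : ℝ :=
  Real.exp (-2 * Real.pi * α * z.im / ‖(c : ℂ) * z + (d : ℂ)‖ ^ 2) /
    ‖(c : ℂ) * z + (d : ℂ)‖

/-- The standard fundamental domain `ℱ` for `SL(2,ℤ)`. -/
noncomputable def Fdom : Set ℂ :=
  {z | 0 < z.im ∧ ((1 < ‖z‖ ∧ z.re ∈ Set.Ioc (-(1/2) : ℝ) (1/2 : ℝ)) ∨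
    (‖z‖ = 1 ∧ Complex.arg z ∈ Set.Icc (Real.pi / 3) (Real.pi / 2)))}

/-- `F(t) = (1/(4π)) · (1/4+t²)·log(1/4+t²) / (t·(t²-3/4))`. -/
noncomputable def Ffun (t : ℝ) : ℝ :=
  (1 / (4 * Real.pi)) * ((1/4 + t^2) * Real.log (1/4 + t^2)) / (t * (t^2 - 3/4))

/-- The arc `𝒜 = {e^{iθ} : θ ∈ [π/3, π/2]}`. -/
noncomputable def arcA : Set ℂ :=
  {z | ∃ θ ∈ Set.Icc (Real.pi / 3) (Real.pi / 2), z = Complex.exp (θ * Complex.I)}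

/-- The segment `ℒ_ρ = {1/2 + ti : t ≥ √3/2}`. -/
noncomputable def lineRho : Set ℂ :=
  {z | ∃ t : ℝ, Real.sqrt 3 / 2 ≤ t ∧ z = 1/2 + t * Complex.I}

/-- The segment `ℒ_i = {ti : t ≥ 1}`. -/
def lineI : Set ℂ := {z | ∃ t : ℝ, 1 ≤ t ∧ z = t * Complex.I}

/-- The curve `Γ_α = {z ∈ ℱ : |z| > 1, 2πα·Im z = log|z|/(1-|z|⁻²)}`. -/
noncomputable def GammaA (α : ℝ) : Set ℂ :=
  {z | z ∈ Fdom ∧ 1 < ‖z‖ ∧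
    2 * Real.pi * α * z.im = Real.log (‖z‖) / (1 - ((‖z‖) ^ 2)⁻¹)}

/-!
Since `|σ_{c,d}(z)| = r_{c,d}(z)^k` with `α` replaced by `β = m/k`, the quotient
`P_n/σ_{c_m,d_m} - 1` is a series of terms of size `(r_{c,d}/r_{c_m,d_m})^k`. By compactness of
`C`, the strict inequality `r_{c,d} < r_{c_m,d_m}` at `α` becomes `r_{c,d} ≤ θ r_{c_m,d_m}` with
`θ < 1` for all `β` near `α`, so each term tends to `0` uniformly on `C`. On the other hand
`|cz+d| ≥ δ ‖(c,d)‖` on `C`, so `r_{c,d} ≤ K/‖(c,d)‖ · r_{c_m,d_m}`: only finitely many pairs can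
have ratio above `1`, hence eventually every ratio is at most `min 1 (K/‖(c,d)‖)` and its `k`-th
power at most `K³/‖(c,d)‖³`, which is summable over `ℤ²`. Tannery's theorem along the filter
`atTop ×ˢ 𝓟 C` then gives the uniform limit.
-/

lemma isCoprime_of_mem_Pset {p : ℤ × ℤ} (hp : p ∈ Pset) : IsCoprime p.1 p.2 := by
  rcases hp with ⟨h, -⟩ | rfl
  · exact h
  · exact isCoprime_zero_left.mpr isUnit_one

lemma ne_zero_of_isCoprime {p : ℤ × ℤ} (hp : IsCoprime p.1 p.2) : p ≠ 0 := by
  rintro rfl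
  exact not_isCoprime_zero_zero hp

lemma zero_notMem_Pset : (0 : ℤ × ℤ) ∉ Pset :=
  fun h => ne_zero_of_isCoprime (isCoprime_of_mem_Pset h) rfl

lemma mul_add_ne_zero {p : ℤ × ℤ} (hp : p ≠ 0) {z : ℂ} (hz : 0 < z.im) :
    (p.1 : ℂ) * z + p.2 ≠ 0 := by
  intro h
  have h1 : (p.1 : ℝ) * z.im = 0 := by simpa using congrArg Complex.im h
  have hc : p.1 = 0 := by exact_mod_cast (mul_eq_zero.mp h1).resolve_right hz.ne'
  have hd : p.2 = 0 := by simpa [hc] using h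
  exact hp (Prod.ext hc hd)

section rP

variable {β : ℝ} {c d : ℤ} {z : ℂ}

lemma rP_nonneg : 0 ≤ rP β c d z := by
  unfold rP; positivity

lemma rP_pos (h : (c : ℂ) * z + d ≠ 0) : 0 < rP β c d z :=
  div_pos (Real.exp_pos _) (norm_pos_iff.mpr h)

lemma rP_le_inv_norm (hβ : 0 ≤ β) (hz : 0 ≤ z.im) : rP β c d z ≤ ‖(c : ℂ) * z + d‖⁻¹ := by
  rw [rP, div_eq_mul_inv]
  refine mul_le_of_le_one_left (by positivity) (Real.exp_le_one_iff.mpr ?_)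
  have : 0 ≤ 2 * Real.pi * β * z.im := by positivity
  exact div_nonpos_of_nonpos_of_nonneg (by linarith) (by positivity)

lemma rP_le_rP_of_le {β' : ℝ} (hz : 0 ≤ z.im) (hββ' : β ≤ β') : rP β' c d z ≤ rP β c d z := by
  refine div_le_div_of_nonneg_right (Real.exp_le_exp.mpr ?_) (norm_nonneg _)
  refine div_le_div_of_nonneg_right ?_ (by positivity)
  nlinarith [mul_nonneg (mul_nonneg Real.pi_pos.le (sub_nonneg.mpr hββ')) hz]

lemma continuousAt_rP (h : (c : ℂ) * z + d ≠ 0) :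
    ContinuousAt (fun x : ℝ × ℂ => rP x.1 c d x.2) (β, z) := by
  have h' : ‖(c : ℂ) * z + d‖ ≠ 0 := norm_ne_zero_iff.mpr h
  unfold rP
  fun_prop (disch := simpa using h')

end rP

lemma im_div_mul_add {a b c d : ℤ} (h : a * d + b * c = 1) (z : ℂ) :
    (((a : ℂ) * z - b) / (c * z + d)).im = z.im / ‖(c : ℂ) * z + d‖ ^ 2 := by
  rw [Complex.div_im, ← sub_div, Complex.normSq_eq_norm_sq]
  congr 1
  simp only [Complex.sub_im, Complex.sub_re, Complex.add_re, Complex.add_im, Complex.mul_re,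
    Complex.mul_im, Complex.intCast_re, Complex.intCast_im]
  have h' : (a : ℝ) * d + b * c = 1 := by exact_mod_cast h
  linear_combination z.im * h'

lemma norm_sigmaP {k m : ℕ} (hk : k ≠ 0) {c d : ℤ} (hcd : IsCoprime c d) (z : ℂ) :
    ‖sigmaP k m c d z‖ = rP (m / k) c d z ^ k := by
  have hbez : Int.gcdB c d * d + Int.gcdA c d * c = 1 := by
    have := Int.gcd_eq_gcd_ab c d
    rw [Int.isCoprime_iff_gcd_eq_one.mp hcd] at this
    linear_combination -this
  have hexp : (2 * Real.pi * Complex.I * (m : ℂ) * ((Int.gcdB c d : ℂ) * z - (Int.gcdA c d : ℂ)) /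
      ((c : ℂ) * z + (d : ℂ))).re = -2 * Real.pi * m * z.im / ‖(c : ℂ) * z + d‖ ^ 2 := by
    rw [mul_div_assoc, show 2 * Real.pi * Complex.I * (m : ℂ) =
        ((2 * Real.pi * m : ℝ) : ℂ) * Complex.I by push_cast; ring,
      mul_assoc, Complex.re_ofReal_mul, Complex.I_mul_re, im_div_mul_add hbez]
    ring
  rw [sigmaP, norm_div, norm_pow, Complex.norm_exp, hexp, rP, div_pow, ← Real.exp_nat_mul]
  congr 2
  field_simp

lemma sigmaP_ne_zero {k m : ℕ} (hk : k ≠ 0) {c d : ℤ} (hcd : IsCoprime c d) {z : ℂ}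
    (hz : 0 < z.im) : sigmaP k m c d z ≠ 0 := by
  rw [← norm_pos_iff, norm_sigmaP hk hcd]
  exact pow_pos (rP_pos (mul_add_ne_zero (p := (c, d)) (ne_zero_of_isCoprime hcd) hz)) k

lemma norm_sigmaP_div_sigmaP_le {k m : ℕ} (hk : k ≠ 0) {p q : ℤ × ℤ} (hp : IsCoprime p.1 p.2)
    (hq : IsCoprime q.1 q.2) {z : ℂ} {t : ℝ} (ht : 0 ≤ t)
    (h : rP (m / k) p.1 p.2 z ≤ t * rP (m / k) q.1 q.2 z) :
    ‖sigmaP k m p.1 p.2 z / sigmaP k m q.1 q.2 z‖ ≤ t ^ k := by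
  rw [norm_div, norm_sigmaP hk hp, norm_sigmaP hk hq]
  refine div_le_of_le_mul₀ (pow_nonneg rP_nonneg k) (pow_nonneg ht k) ?_
  rw [← mul_pow]
  exact pow_le_pow_left₀ rP_nonneg h k

open UpperHalfPlane in
lemma exists_pos_mul_norm_le_norm_mul_add {C : Set ℂ} (hC : IsCompact C)
    (him : ∀ z ∈ C, 0 < z.im) :
    ∃ δ > 0, ∀ z ∈ C, ∀ p : ℤ × ℤ, δ * ‖p‖ ≤ ‖(p.1 : ℂ) * z + p.2‖ := by
  have hC' : IsCompact ((↑) ⁻¹' C : Set ℍ) :=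
    (isOpenEmbedding_coe.isInducing.isCompact_preimage_iff
      fun z hz => ⟨⟨z, him z hz⟩, rfl⟩).mpr hC
  obtain ⟨A, B, hB, hsub⟩ := subset_verticalStrip_of_isCompact hC'
  refine ⟨_, EisensteinSeries.r_pos ⟨⟨A, B⟩, hB⟩, fun z hz p => ?_⟩
  rcases eq_or_ne p 0 with rfl | hp
  · simp
  have hnorm : ‖![p.1, p.2]‖ = ‖p‖ := by
    simp [EisensteinSeries.norm_eq_max_natAbs, Prod.norm_def, Int.norm_eq_abs]
  have hx : ![p.1, p.2] ≠ 0 := by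
    rw [← norm_ne_zero_iff, hnorm]
    exact norm_ne_zero_iff.mpr hp
  rw [← hnorm]
  calc _ ≤ EisensteinSeries.r ⟨z, him z hz⟩ * ‖![p.1, p.2]‖ := by
        gcongr
        exact EisensteinSeries.r_lower_bound_on_verticalStrip _ hB (hsub hz)
    _ ≤ _ := EisensteinSeries.r_mul_max_le _ hx

lemma summable_norm_inv_pow_three : Summable fun p : ℤ × ℤ => ‖p‖⁻¹ ^ 3 := by
  refine (finTwoArrowEquiv ℤ).summable_iff.mp ?_
  refine (EisensteinSeries.summable_one_div_norm_rpow (k := 3) (by norm_num)).congr fun x => ?_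
  simp [EisensteinSeries.norm_eq_max_natAbs, Prod.norm_def, Int.norm_eq_abs]

section Domination

variable {α : ℝ} {C : Set ℂ} {q : ℤ × ℤ}

lemma exists_eventually_rP_le_div_norm_mul (hα : 0 < α) (hC : IsCompact C)
    (him : ∀ z ∈ C, 0 < z.im) (hq : q ≠ 0) :
    ∃ K > 0, ∀ᶠ β in 𝓝 α, ∀ z ∈ C, ∀ p : ℤ × ℤ, p ≠ 0 →
      rP β p.1 p.2 z ≤ K / ‖p‖ * rP β q.1 q.2 z := by
  obtain ⟨δ, hδ, hδle⟩ := exists_pos_mul_norm_le_norm_mul_add hC him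
  have hcont : ContinuousOn (fun z => rP (α + 1) q.1 q.2 z) C := fun z hz =>
    ((continuousAt_rP (mul_add_ne_zero hq (him z hz))).comp
      (Continuous.prodMk_right (α + 1)).continuousAt).continuousWithinAt
  obtain ⟨a, ha, hale⟩ :=
    hC.exists_forall_le' hcont fun z hz => rP_pos (mul_add_ne_zero hq (him z hz))
  refine ⟨(δ * a)⁻¹, by positivity, ?_⟩
  filter_upwards [Ioo_mem_nhds hα (lt_add_one α)] with β hβ z hz p hp
  have hpos : 0 < δ * ‖p‖ := mul_pos hδ (norm_pos_iff.mpr hp)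
  calc rP β p.1 p.2 z ≤ ‖(p.1 : ℂ) * z + p.2‖⁻¹ := rP_le_inv_norm hβ.1.le (him z hz).le
    _ ≤ (δ * ‖p‖)⁻¹ := inv_anti₀ hpos (hδle z hz p)
    _ = (δ * a)⁻¹ / ‖p‖ * a := by field_simp
    _ ≤ (δ * a)⁻¹ / ‖p‖ * rP (α + 1) q.1 q.2 z := by gcongr; exact hale z hz
    _ ≤ (δ * a)⁻¹ / ‖p‖ * rP β q.1 q.2 z := by gcongr; exact rP_le_rP_of_le (him z hz).le hβ.2.le

lemma exists_lt_one_eventually_rP_lt (hC : IsCompact C) (him : ∀ z ∈ C, 0 < z.im)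
    {p : ℤ × ℤ} (hp : p ≠ 0) (hq : q ≠ 0)
    (hlt : ∀ z ∈ C, rP α p.1 p.2 z < rP α q.1 q.2 z) :
    ∃ θ ∈ Ioo (0 : ℝ) 1, ∀ᶠ β in 𝓝 α, ∀ z ∈ C, rP β p.1 p.2 z < θ * rP β q.1 q.2 z := by
  have hloc : ∀ z ∈ C, ∀ᶠ x : (ℝ × ℝ) × ℂ in 𝓝 ((1, α), z),
      rP x.1.2 p.1 p.2 x.2 < x.1.1 * rP x.1.2 q.1 q.2 x.2 := by
    intro z hz
    have hcont {r : ℤ × ℤ} (hr : r ≠ 0) :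
        ContinuousAt (fun x : (ℝ × ℝ) × ℂ => rP x.1.2 r.1 r.2 x.2) ((1, α), z) :=
      ContinuousAt.comp (x := ((1, α), z)) (f := fun x : (ℝ × ℝ) × ℂ => (x.1.2, x.2))
        (continuousAt_rP (mul_add_ne_zero hr (him z hz))) (by fun_prop)
    exact (hcont hp).eventually_lt (continuousAt_fst.fst.mul (hcont hq)) (by simpa using hlt z hz)
  have hunif := hC.eventually_forall_of_forall_eventually
    (P := fun (y : ℝ × ℝ) z => rP y.2 p.1 p.2 z < y.1 * rP y.2 q.1 q.2 z) hloc
  rw [nhds_prod_eq] at hunif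
  exact ((hunif.curry.filter_mono nhdsWithin_le_nhds).and (Ioo_mem_nhdsLT one_pos)).exists.imp
    fun θ h => ⟨h.2, h.1⟩

lemma eventually_forall_rP_le (hα : 0 < α) (hC : IsCompact C) (him : ∀ z ∈ C, 0 < z.im)
    {S : Set (ℤ × ℤ)} (hS : (0 : ℤ × ℤ) ∉ S) (hq : q ≠ 0)
    (hr : ∀ p ∈ S, p ≠ q → ∀ z ∈ C, rP α p.1 p.2 z < rP α q.1 q.2 z) :
    ∀ᶠ β in 𝓝 α, ∀ z ∈ C, ∀ p ∈ S, rP β p.1 p.2 z ≤ rP β q.1 q.2 z := by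
  obtain ⟨K, -, hK⟩ := exists_eventually_rP_le_div_norm_mul hα hC him hq
  have hfin : {p ∈ S | ‖p‖ ≤ K}.Finite :=
    ((isCompact_closedBall (0 : ℤ × ℤ) K).finite DiscreteTopology.isDiscrete).subset
      fun p hp => mem_closedBall_zero_iff.mpr hp.2
  have hsmall : ∀ᶠ β in 𝓝 α, ∀ p ∈ {p ∈ S | ‖p‖ ≤ K}, ∀ z ∈ C,
      rP β p.1 p.2 z ≤ rP β q.1 q.2 z := by
    refine (eventually_all_finite hfin).mpr fun p hp => ?_
    rcases eq_or_ne p q with rfl | hpq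
    · exact Eventually.of_forall fun β z _ => le_rfl
    obtain ⟨θ, hθ, hev⟩ := exists_lt_one_eventually_rP_lt hC him (ne_of_mem_of_not_mem hp.1 hS)
      hq (hr p hp.1 hpq)
    filter_upwards [hev] with β hβ z hz
    exact (hβ z hz).le.trans (mul_le_of_le_one_left rP_nonneg hθ.2.le)
  filter_upwards [hK, hsmall] with β hK hsmall z hz p hp
  by_cases hpK : ‖p‖ ≤ K
  · exact hsmall p ⟨hp, hpK⟩ z hz
  · have hp0 : p ≠ 0 := ne_of_mem_of_not_mem hp hS
    refine (hK z hz p hp0).trans (mul_le_of_le_one_left rP_nonneg ?_)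
    exact (div_le_one (norm_pos_iff.mpr hp0)).mpr (not_le.mp hpK).le

end Domination

section PoincareSeries

variable {α : ℝ} {k m : ℕ → ℕ} {C : Set ℂ} {q : ℤ × ℤ}

lemma tendsto_sigmaP_div_sigmaP_zero (hk : Tendsto k atTop atTop)
    (hm : Tendsto (fun n => (m n : ℝ) / k n) atTop (𝓝 α)) (hC : IsCompact C)
    (him : ∀ z ∈ C, 0 < z.im) {p : ℤ × ℤ} (hp : IsCoprime p.1 p.2) (hq : IsCoprime q.1 q.2)
    (hlt : ∀ z ∈ C, rP α p.1 p.2 z < rP α q.1 q.2 z) :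
    Tendsto (fun x : ℕ × ℂ => sigmaP (k x.1) (m x.1) p.1 p.2 x.2 /
      sigmaP (k x.1) (m x.1) q.1 q.2 x.2) (atTop ×ˢ 𝓟 C) (𝓝 0) := by
  obtain ⟨θ, hθ, hev⟩ := exists_lt_one_eventually_rP_lt hC him (ne_zero_of_isCoprime hp)
    (ne_zero_of_isCoprime hq) hlt
  refine squeeze_zero_norm' ?_
    ((tendsto_pow_atTop_nhds_zero_of_lt_one hθ.1.le hθ.2).comp (hk.comp tendsto_fst))
  refine eventually_prod_principal_iff.mpr ?_
  filter_upwards [hm.eventually hev, hk.eventually_ne_atTop 0] with n hn hkn z hz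
  exact norm_sigmaP_div_sigmaP_le hkn hp hq hθ.1.le (hn z hz).le

lemma exists_eventually_norm_sigmaP_div_sigmaP_le (hα : 0 < α) (hk : Tendsto k atTop atTop)
    (hm : Tendsto (fun n => (m n : ℝ) / k n) atTop (𝓝 α)) (hC : IsCompact C)
    (him : ∀ z ∈ C, 0 < z.im) (hq : q ∈ Pset)
    (hr : ∀ p ∈ Pset, p ≠ q → ∀ z ∈ C, rP α p.1 p.2 z < rP α q.1 q.2 z) :
    ∃ K, ∀ᶠ x in atTop ×ˢ 𝓟 C, ∀ p : ↥Pset,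
      ‖sigmaP (k x.1) (m x.1) p.1.1 p.1.2 x.2 / sigmaP (k x.1) (m x.1) q.1 q.2 x.2‖ ≤
        K ^ 3 * ‖(p : ℤ × ℤ)‖⁻¹ ^ 3 := by
  have hq0 := ne_zero_of_isCoprime (isCoprime_of_mem_Pset hq)
  obtain ⟨K, hK, hKev⟩ := exists_eventually_rP_le_div_norm_mul hα hC him hq0
  refine ⟨K, eventually_prod_principal_iff.mpr ?_⟩
  filter_upwards [hm.eventually hKev, hm.eventually
    (eventually_forall_rP_le hα hC him zero_notMem_Pset hq0 hr), hk.eventually_ge_atTop 3]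
    with n hKn hle hk3 z hz p
  have hp := isCoprime_of_mem_Pset p.2
  set t := min 1 (K / ‖(p : ℤ × ℤ)‖)
  have ht : 0 ≤ t := le_min zero_le_one (by positivity)
  have hrP : rP (m n / k n) p.1.1 p.1.2 z ≤ t * rP (m n / k n) q.1 q.2 z := by
    rw [min_mul_of_nonneg _ _ rP_nonneg, one_mul]
    exact le_min (hle z hz p p.2) (hKn z hz p (ne_zero_of_isCoprime hp))
  calc _ ≤ t ^ k n := norm_sigmaP_div_sigmaP_le (by omega) hp (isCoprime_of_mem_Pset hq) ht hrP
    _ ≤ t ^ 3 := pow_le_pow_of_le_one ht (min_le_left _ _) hk3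
    _ ≤ (K / ‖(p : ℤ × ℤ)‖) ^ 3 := pow_le_pow_left₀ ht (min_le_right _ _) 3
    _ = K ^ 3 * ‖(p : ℤ × ℤ)‖⁻¹ ^ 3 := by rw [div_eq_mul_inv, mul_pow]

lemma tendsto_poincareP_div_sigmaP (hα : 0 < α) (hk : Tendsto k atTop atTop)
    (hm : Tendsto (fun n => (m n : ℝ) / k n) atTop (𝓝 α)) (hC : IsCompact C)
    (him : ∀ z ∈ C, 0 < z.im) (hq : q ∈ Pset)
    (hr : ∀ p ∈ Pset, p ≠ q → ∀ z ∈ C, rP α p.1 p.2 z < rP α q.1 q.2 z) :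
    Tendsto (fun x : ℕ × ℂ => poincareP (k x.1) (m x.1) x.2 /
      sigmaP (k x.1) (m x.1) q.1 q.2 x.2) (atTop ×ˢ 𝓟 C) (𝓝 1) := by
  have hqc := isCoprime_of_mem_Pset hq
  have hlim (p : ↥Pset) : Tendsto (fun x : ℕ × ℂ => sigmaP (k x.1) (m x.1) p.1.1 p.1.2 x.2 /
      sigmaP (k x.1) (m x.1) q.1 q.2 x.2) (atTop ×ˢ 𝓟 C)
      (𝓝 (if p = ⟨q, hq⟩ then 1 else 0)) := by
    split_ifs with hpq
    · subst hpq
      refine tendsto_const_nhds.congr' (eventually_prod_principal_iff.mpr ?_)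
      filter_upwards [hk.eventually_ne_atTop 0] with n hn z hz
      exact (div_self (sigmaP_ne_zero hn hqc (him z hz))).symm
    · exact tendsto_sigmaP_div_sigmaP_zero hk hm hC him (isCoprime_of_mem_Pset p.2) hqc
        (hr p p.2 fun h => hpq (Subtype.ext h))
  obtain ⟨K, hK⟩ := exists_eventually_norm_sigmaP_div_sigmaP_le hα hk hm hC him hq hr
  have := tendsto_tsum_of_dominated_convergence
    ((summable_norm_inv_pow_three.subtype Pset).mul_left (K ^ 3)) hlim hK
  simp only [tsum_ite_eq, tsum_div_const] at this
  exact this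

end PoincareSeries

theorem poincare_dominant_term_general (α : ℝ) (hα : 0 < α)
    (k m : ℕ → ℕ) (hki : Tendsto k atTop atTop)
    (hm : Tendsto (fun n => (m n : ℝ) / (k n : ℝ)) atTop (nhds α))
    (C : Set ℂ) (hCF : C ⊆ Fdom) (hCc : IsCompact C)
    (cm dm : ℤ) (hcm : (cm, dm) ∈ Pset)
    (hr : ∀ p ∈ Pset, p ≠ (cm, dm) → ∀ z ∈ C, rP α p.1 p.2 z < rP α cm dm z) :
    (∀ ε : ℝ, 0 < ε → ∀ᶠ n in atTop, ∀ z ∈ C,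
      ‖poincareP (k n) (m n) z / sigmaP (k n) (m n) cm dm z - 1‖ ≤ ε) ∧
    (∃ N : ℕ, ∀ n ≥ N, ∀ z ∈ C, poincareP (k n) (m n) z ≠ 0) := by
  have hlim := tendsto_poincareP_div_sigmaP hα hki hm hCc (fun z hz => (hCF hz).1) hcm hr
  have hclose (ε : ℝ) (hε : 0 < ε) : ∀ᶠ n in atTop, ∀ z ∈ C,
      ‖poincareP (k n) (m n) z / sigmaP (k n) (m n) cm dm z - 1‖ ≤ ε := by
    filter_upwards [eventually_prod_principal_iff.mp
      (hlim.eventually (Metric.closedBall_mem_nhds 1 hε))] with n hn z hz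
    simpa [dist_eq_norm] using hn z hz
  refine ⟨hclose, ?_⟩
  obtain ⟨N, hN⟩ := eventually_atTop.mp (hclose (1 / 2) (by norm_num))
  refine ⟨N, fun n hn z hz h0 => ?_⟩
  have := hN n hn z hz
  norm_num [h0] at this

/-- if `r_{c_m,d_m}` is strictly maximal on a nonempty compact `C ⊆ ℱ`, then
`sup_{z∈C} |P_n(z)/σ⁽ⁿ⁾_{c_m,d_m}(z) - 1| → 0`, and in particular `P_n` is eventually
nonvanishing on `C`. -/
theorem poincare_dominant_term (α : ℝ) (hα : 0 < α)
    (k m : ℕ → ℕ) (hke : ∀ n, Even (k n)) (hk4 : ∀ n, 4 ≤ k n)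
    (hki : Tendsto k atTop atTop)
    (hm : Tendsto (fun n => (m n : ℝ) / (k n : ℝ)) atTop (nhds α))
    (C : Set ℂ) (hCF : C ⊆ Fdom) (hCne : C.Nonempty) (hCc : IsCompact C)
    (cm dm : ℤ) (hcm : (cm, dm) ∈ Pset)
    (hr : ∀ p ∈ Pset, p ≠ (cm, dm) → ∀ z ∈ C, rP α p.1 p.2 z < rP α cm dm z) :
    (∀ ε : ℝ, 0 < ε → ∀ᶠ n in atTop, ∀ z ∈ C,
      ‖poincareP (k n) (m n) z / sigmaP (k n) (m n) cm dm z - 1‖ ≤ ε) ∧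
    (∃ N : ℕ, ∀ n ≥ N, ∀ z ∈ C, poincareP (k n) (m n) z ≠ 0) :=
  poincare_dominant_term_general α hα k m hki hm C hCF hCc cm dm hcm hr
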